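/- At any optimal solution of minimize -log det(L + (1/n)J) subject to L ∈ 𝕃ₙ (Laplacians with support in E) and Σ_{e∈E} h_e w_e ≤ n-1, every edge e with positive optimal weight satisfies r*_e = h_e, and every edge e ∈ E with zero optimal weight satisfies r*_e ≤ h_e, where r*_e is the effective resistance in the optimal graph. -/

import Mathlib

open Matrix BigOperators

/-- Edge vector g_e for edge e = (i,j): +1 at i, -1 at j. -/
noncomputable def edgeVec (n : ℕ) (i j : Fin n) : Fin n → ℝ :=
  fun k => (if k = i then (1:ℝ) else 0) - (if k = j then (1:ℝ) else 0)

/-- Combinatorial graph Laplacian L = Σ_{e∈E} w_e g_e g_eᵀ. -/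
noncomputable def glap (n : ℕ) (E : Finset (Fin n × Fin n)) (w : Fin n × Fin n → ℝ) :
    Matrix (Fin n) (Fin n) ℝ :=
  ∑ e ∈ E, w e • Matrix.vecMulVec (edgeVec n e.1 e.2) (edgeVec n e.1 e.2)

/-- The all-ones n×n matrix J. -/
noncomputable def ones (n : ℕ) : Matrix (Fin n) (Fin n) ℝ := Matrix.of fun _ _ => (1:ℝ)

/-- Strengthened Laplacian Q = L + (1/n) J. -/
noncomputable def sLap (n : ℕ) (E : Finset (Fin n × Fin n)) (w : Fin n × Fin n → ℝ) :
    Matrix (Fin n) (Fin n) ℝ := glap n E w + (n : ℝ)⁻¹ • ones n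

/-- The simple graph on Fin n with (undirected) edges given by the pairs in E. -/
def graphOf (n : ℕ) (E : Finset (Fin n × Fin n)) : SimpleGraph (Fin n) :=
  SimpleGraph.fromEdgeSet ↑(E.image fun e => s(e.1, e.2))

/-- T is a spanning tree: its graph is connected and it has n-1 edges. -/
def IsSpanningTree (n : ℕ) (T : Finset (Fin n × Fin n)) : Prop :=
  (graphOf n T).Connected ∧ T.card = n - 1

open scoped Classical in
/-- Ω(L(w)) : the total weight of spanning trees, Σ_{spanning T ⊆ E} Π_{e∈T} w_e. -/
noncomputable def treeWeightSum (n : ℕ) (E : Finset (Fin n × Fin n))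
    (w : Fin n × Fin n → ℝ) : ℝ :=
  ∑ T ∈ E.powerset.filter (IsSpanningTree n), ∏ e ∈ T, w e

/-- B is the Moore–Penrose pseudoinverse of A. -/
def IsMoorePenrose {n : ℕ} (A B : Matrix (Fin n) (Fin n) ℝ) : Prop :=
  A * B * A = A ∧ B * A * B = B ∧ (A * B)ᵀ = A * B ∧ (B * A)ᵀ = B * A


/-! Perturb an optimal `w` by putting extra weight `t` on an edge `e` and rescaling by `ρ⁻¹`,
`ρ = 1 + t h_e / (n - 1)`, which keeps the budget. Because `L J = 0`, the rescaling multiplies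
`det (L + J / n)` by `ρ^{-(n-1)}`, and by the matrix determinant lemma the rank-one update
multiplies it by `1 + t r_e`. Optimality thus gives `1 + t r_e ≤ ρ ^ (n - 1) = 1 + t h_e + O(t²)`
for all small `t ≥ -w_e`; comparing first-order terms yields `r_e ≤ h_e`, and equality when
`t` may also be negative, i.e. when `w_e > 0`. -/

open Filter Topology

lemma ones_eq_vecMulVec (n : ℕ) : ones n = vecMulVec (fun _ => 1) (fun _ => 1) := by
  ext; simp [ones, vecMulVec_apply]

lemma edgeVec_dotProduct_one (n : ℕ) (i j : Fin n) : edgeVec n i j ⬝ᵥ (fun _ => 1) = 0 := by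
  simp [edgeVec, dotProduct, Finset.sum_sub_distrib]

lemma glap_mul_ones (n : ℕ) (E : Finset (Fin n × Fin n)) (w : Fin n × Fin n → ℝ) :
    glap n E w * ones n = 0 := by
  simp [glap, Finset.sum_mul, ones_eq_vecMulVec, vecMulVec_mul_vecMulVec, edgeVec_dotProduct_one]

lemma ones_mul_ones (n : ℕ) : ones n * ones n = (n : ℝ) • ones n := by
  ext; simp [ones, mul_apply]

theorem det_add_vecMulVec {ι R : Type*} [Fintype ι] [DecidableEq ι] [CommRing R]
    {A : Matrix ι ι R} (hA : IsUnit A.det) (u v : ι → R) :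
    (A + vecMulVec u v).det = A.det * (1 + v ⬝ᵥ A⁻¹ *ᵥ u) := by
  rw [vecMulVec_eq Unit, det_add_replicateCol_mul_replicateRow hA, Matrix.mul_assoc,
    ← replicateCol_mulVec, det_unique (1 + _)]
  rfl

theorem det_smul_one_add_smul_ones (n : ℕ) {c : ℝ} (hc : c ≠ 0) (s : ℝ) :
    (c • (1 : Matrix (Fin n) (Fin n) ℝ) + s • ones n).det = c ^ n * (1 + n * s / c) := by
  have hinv : (c • (1 : Matrix (Fin n) (Fin n) ℝ))⁻¹ = c⁻¹ • 1 :=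
    inv_eq_left_inv <| by rw [smul_mul_smul_comm, inv_mul_cancel₀ hc, one_mul, one_smul]
  rw [ones_eq_vecMulVec, ← smul_vecMulVec, det_add_vecMulVec (by simp [hc]), hinv]
  simp [dotProduct, smul_mulVec, div_eq_inv_mul, mul_left_comm]

theorem det_smul_add_inv_smul_ones {n : ℕ} {L : Matrix (Fin n) (Fin n) ℝ} (hL : L * ones n = 0)
    {c : ℝ} (hc : c ≠ 0) :
    (c • L + (n : ℝ)⁻¹ • ones n).det = c ^ (n - 1) * (L + (n : ℝ)⁻¹ • ones n).det := by
  rcases n with _ | k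
  · simp
  have hfactor : c • L + ((k + 1 : ℕ) : ℝ)⁻¹ • ones (k + 1) =
      (L + ((k + 1 : ℕ) : ℝ)⁻¹ • ones (k + 1)) *
        (c • 1 + ((1 - c) / (k + 1 : ℕ)) • ones (k + 1)) := by
    simp only [add_mul, mul_add, Matrix.mul_smul, Matrix.smul_mul, hL, ones_mul_ones, mul_one,
      smul_zero, smul_smul]
    match_scalars <;> field_simp
    ring
  rw [hfactor, det_mul, det_smul_one_add_smul_ones _ hc, Nat.add_sub_cancel, mul_comm]
  congr 1
  field_simp
  ring

section Laplacian

variable {n : ℕ} {E : Finset (Fin n × Fin n)}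

lemma glap_add (w w' : Fin n × Fin n → ℝ) : glap n E (w + w') = glap n E w + glap n E w' := by
  simp [glap, add_smul, Finset.sum_add_distrib]

lemma glap_smul (c : ℝ) (w : Fin n × Fin n → ℝ) : glap n E (c • w) = c • glap n E w := by
  simp [glap, Finset.smul_sum, smul_smul]

lemma glap_single {e : Fin n × Fin n} (he : e ∈ E) (t : ℝ) :
    glap n E (Pi.single e t) = vecMulVec (t • edgeVec n e.1 e.2) (edgeVec n e.1 e.2) := by
  rw [glap, Finset.sum_eq_single_of_mem e he fun a _ hae => by simp [hae], Pi.single_eq_same,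
    smul_vecMulVec]

noncomputable def effRes (n : ℕ) (E : Finset (Fin n × Fin n)) (w : Fin n × Fin n → ℝ)
    (e : Fin n × Fin n) : ℝ :=
  edgeVec n e.1 e.2 ⬝ᵥ (sLap n E w)⁻¹ *ᵥ edgeVec n e.1 e.2

lemma det_sLap_smul (w : Fin n × Fin n → ℝ) {c : ℝ} (hc : c ≠ 0) :
    (sLap n E (c • w)).det = c ^ (n - 1) * (sLap n E w).det := by
  rw [sLap, glap_smul, det_smul_add_inv_smul_ones (glap_mul_ones n E w) hc, sLap]

lemma det_sLap_add_single {w : Fin n × Fin n → ℝ} (hw : IsUnit (sLap n E w).det)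
    {e : Fin n × Fin n} (he : e ∈ E) (t : ℝ) :
    (sLap n E (w + Pi.single e t)).det = (sLap n E w).det * (1 + t * effRes n E w e) := by
  rw [sLap, glap_add, glap_single he, add_right_comm, ← sLap, det_add_vecMulVec hw, effRes,
    mulVec_smul, dotProduct_smul, smul_eq_mul]

end Laplacian

section FirstOrder

lemma HasDerivAt.nonneg_of_eventually_ge_right {f : ℝ → ℝ} {f' a : ℝ} (hf : HasDerivAt f f' a)
    (h : ∀ᶠ t in 𝓝[>] a, f a ≤ f t) : 0 ≤ f' := by
  refine ge_of_tendsto ((hasDerivWithinAt_iff_tendsto_slope' Set.self_notMem_Ioi).1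
    hf.hasDerivWithinAt) ?_
  filter_upwards [h, self_mem_nhdsWithin] with t hft (hat : a < t)
  rw [slope_def_field]
  exact div_nonneg (sub_nonneg.2 hft) (sub_nonneg.2 hat.le)

variable {m : ℕ} {r s : ℝ}

lemma hasDerivAt_one_add_mul_div_pow_sub (hm : m ≠ 0) :
    HasDerivAt (fun t : ℝ => (1 + t * s / m) ^ m - (1 + t * r)) (s - r) 0 := by
  have := ((((hasDerivAt_id' (0 : ℝ)).mul_const s).div_const m).const_add 1).fun_pow m |>.fun_sub
    (((hasDerivAt_id' (0 : ℝ)).mul_const r).const_add 1)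
  refine this.congr_deriv ?_
  simp [mul_div_cancel₀, hm]

lemma le_of_eventually_one_add_mul_le_pow (hm : m ≠ 0)
    (h : ∀ᶠ t in 𝓝[>] 0, 1 + t * r ≤ (1 + t * s / m) ^ m) : r ≤ s :=
  sub_nonneg.1 <| (hasDerivAt_one_add_mul_div_pow_sub hm).nonneg_of_eventually_ge_right <|
    h.mono fun t ht => by simpa using ht

lemma eq_of_eventually_one_add_mul_le_pow (hm : m ≠ 0)
    (h : ∀ᶠ t in 𝓝 0, 1 + t * r ≤ (1 + t * s / m) ^ m) : r = s :=
  (sub_eq_zero.1 <| IsLocalMin.hasDerivAt_eq_zero (h.mono fun t ht => by simpa using ht)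
    (hasDerivAt_one_add_mul_div_pow_sub hm)).symm

end FirstOrder

theorem one_add_mul_effRes_le_pow {n : ℕ} {E : Finset (Fin n × Fin n)} {h w : Fin n × Fin n → ℝ}
    (hn : 2 ≤ n) (hw : ∀ a ∈ E, 0 ≤ w a) (hbud : ∑ a ∈ E, h a * w a ≤ (n : ℝ) - 1)
    (hopt : ∀ w' : Fin n × Fin n → ℝ, (∀ a ∈ E, 0 ≤ w' a) →
      ∑ a ∈ E, h a * w' a ≤ (n : ℝ) - 1 →
      -Real.log ((sLap n E w).det) ≤ -Real.log ((sLap n E w').det))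
    (hQ : 0 < (sLap n E w).det) {e : Fin n × Fin n} (he : e ∈ E) {t : ℝ} (ht : 0 ≤ w e + t)
    (hρ : 0 < 1 + t * h e / (n - 1 : ℕ)) :
    1 + t * effRes n E w e ≤ (1 + t * h e / (n - 1 : ℕ)) ^ (n - 1) := by
  set ρ := 1 + t * h e / (n - 1 : ℕ)
  -- rescaling by `ρ⁻¹` restores the budget spent on the extra weight `t` on `e`
  set w' := ρ⁻¹ • (w + Pi.single e t)
  have hw' : ∀ a ∈ E, 0 ≤ w' a := fun a ha => mul_nonneg (inv_nonneg.2 hρ.le) <| by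
    rcases eq_or_ne a e with rfl | hae
    · simpa using ht
    · simpa [hae] using hw a ha
  have hbud' : ∑ a ∈ E, h a * w' a ≤ (n : ℝ) - 1 := by
    have hsum : ∑ a ∈ E, h a * w' a = ρ⁻¹ * (∑ a ∈ E, h a * w a + h e * t) := by
      simp [w', mul_add, Finset.sum_add_distrib, Finset.mul_sum, Pi.single_apply, he,
        mul_left_comm (h _)]
    have hn1 : ((n - 1 : ℕ) : ℝ) = n - 1 := Nat.cast_pred (by omega)
    have hρn : ρ * (n - 1 : ℕ) = (n - 1 : ℕ) + h e * t := by
      rw [add_mul, one_mul, div_mul_cancel₀ _ (by norm_cast; omega), mul_comm t]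
    rw [hsum, inv_mul_le_iff₀ hρ, ← hn1, hρn]
    linarith
  have hdet :
      (sLap n E w').det = ρ⁻¹ ^ (n - 1) * ((sLap n E w).det * (1 + t * effRes n E w e)) := by
    rw [det_sLap_smul _ (inv_ne_zero hρ.ne'), det_sLap_add_single hQ.ne'.isUnit he]
  rcases le_or_gt (1 + t * effRes n E w e) 0 with hle | hpos
  · exact hle.trans (pow_pos hρ _).le
  have hQ' : 0 < (sLap n E w').det := by rw [hdet]; positivity
  have hle : (sLap n E w').det ≤ (sLap n E w).det :=
    (Real.log_le_log_iff hQ' hQ).1 (neg_le_neg_iff.1 (hopt w' hw' hbud'))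
  rw [hdet, inv_pow, ← div_eq_inv_mul, div_le_iff₀ (pow_pos hρ _)] at hle
  exact le_of_mul_le_mul_left hle hQ

theorem stmt10_general {n : ℕ} (E : Finset (Fin n × Fin n))
    (h : Fin n × Fin n → ℝ)
    (hloop : ∀ e ∈ E, e.1 ≠ e.2)
    (wstar : Fin n × Fin n → ℝ)
    (hfeas : (∀ e ∈ E, 0 ≤ wstar e) ∧ ∑ e ∈ E, h e * wstar e ≤ (n : ℝ) - 1)
    (hopt : ∀ w : Fin n × Fin n → ℝ, (∀ e ∈ E, 0 ≤ w e) →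
      ∑ e ∈ E, h e * w e ≤ (n : ℝ) - 1 →
      -Real.log ((sLap n E wstar).det) ≤ -Real.log ((sLap n E w).det))
    (hconn : (sLap n E wstar).PosDef) :
    ∀ e ∈ E,
      (0 < wstar e →
        edgeVec n e.1 e.2 ⬝ᵥ ((sLap n E wstar)⁻¹ *ᵥ edgeVec n e.1 e.2) = h e) ∧
      (wstar e = 0 →
        edgeVec n e.1 e.2 ⬝ᵥ ((sLap n E wstar)⁻¹ *ᵥ edgeVec n e.1 e.2) ≤ h e) := by
  intro e he
  have hn : 2 ≤ n := Fin.nontrivial_iff_two_le.1 ⟨e.1, e.2, hloop e he⟩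
  have hρ : ∀ᶠ t in 𝓝 (0 : ℝ), 0 < 1 + t * h e / (n - 1 : ℕ) :=
    (Continuous.tendsto' (by fun_prop) 0 1 (by simp)).eventually (eventually_gt_nhds one_pos)
  have key : ∀ᶠ t in 𝓝 (0 : ℝ), 0 ≤ wstar e + t →
      1 + t * effRes n E wstar e ≤ (1 + t * h e / (n - 1 : ℕ)) ^ (n - 1) := by
    filter_upwards [hρ] with t hρt ht using
      one_add_mul_effRes_le_pow hn hfeas.1 hfeas.2 hopt hconn.det_pos he ht hρt
  have hm : n - 1 ≠ 0 := by omega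
  refine ⟨fun hpos => eq_of_eventually_one_add_mul_le_pow hm ?_,
    fun _ => le_of_eventually_one_add_mul_le_pow hm ?_⟩
  · filter_upwards [key, eventually_gt_nhds (neg_lt_zero.2 hpos)] with t hkey ht
    exact hkey (by linarith)
  · filter_upwards [nhdsWithin_le_nhds key, self_mem_nhdsWithin] with t hkey (ht : 0 < t)
    exact hkey (by linarith [hfeas.1 e he])

/-- KKT conditions at the optimum: r*_e = h_e if w*_e > 0,
and r*_e ≤ h_e if w*_e = 0, for e ∈ E. -/
theorem stmt10 {n : ℕ} (hn : 0 < n) (E : Finset (Fin n × Fin n))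
    (h : Fin n × Fin n → ℝ) (hh : ∀ e ∈ E, 0 < h e)
    (hloop : ∀ e ∈ E, e.1 ≠ e.2)
    (wstar : Fin n × Fin n → ℝ)
    (hfeas : (∀ e ∈ E, 0 ≤ wstar e) ∧ ∑ e ∈ E, h e * wstar e ≤ (n : ℝ) - 1)
    (hopt : ∀ w : Fin n × Fin n → ℝ, (∀ e ∈ E, 0 ≤ w e) →
      ∑ e ∈ E, h e * w e ≤ (n : ℝ) - 1 →
      -Real.log ((sLap n E wstar).det) ≤ -Real.log ((sLap n E w).det))
    (hconn : (sLap n E wstar).PosDef) :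
    ∀ e ∈ E,
      (0 < wstar e →
        edgeVec n e.1 e.2 ⬝ᵥ ((sLap n E wstar)⁻¹ *ᵥ edgeVec n e.1 e.2) = h e) ∧
      (wstar e = 0 →
        edgeVec n e.1 e.2 ⬝ᵥ ((sLap n E wstar)⁻¹ *ᵥ edgeVec n e.1 e.2) ≤ h e) :=
  stmt10_general E h hloop wstar hfeas hopt hconn
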